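/- Define φ from the tensor algebra on the dual length-one generators of A_0 to B_0 by φ(U_i^*) = ρ_i, φ(s_i^*) = σ_i, φ(a^*) = 0 if ℓ(a) > 1, extended by φ(a_1^* ⊗ ··· ⊗ a_n^*) = φ(a_n)···φ(a_1). Then φ : Cob~(A_0) → B_0 is a chain map, where B_0 carries the zero differential and Cob~(A_0) carries the cobar differential δ(a_1^* ⊗ ··· ⊗ a_n^*) = Σ_i a_1^* ⊗ ··· ⊗ μ_2^*(a_i^*) ⊗ ··· ⊗ a_n^*. -/

import Mathlib

/-- The ground ring 𝔽₂. -/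
abbrev GroundRing := ZMod 2

/-- Generators of the associative algebra `A₀`: idempotents `I i`, and elements
`U i`, `s i`, for `i` ranging over `Fin N` (indices are taken mod `N`). -/
inductive AGen (N : ℕ) : Type
  | I : Fin N → AGen N
  | U : Fin N → AGen N
  | s : Fin N → AGen N
deriving DecidableEq

variable (N : ℕ) [NeZero N]

open FreeAlgebra in
/-- The defining relations of `A₀` from the paper:
`I_i I_j = δ_{ij} I_i`; `I_j U_i = U_i I_j = δ_{ij} U_i`; `I_j s_i = δ_{ij} s_i`;
`s_i I_j = s_i` iff `j = i+1 (mod N)`; `U_i U_j = 0` for `i ≠ j`;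
`U_i s_j = s_j U_i = 0`; `s_i s_j = 0` unless `j = i+1 (mod N)`. -/
inductive ARel : FreeAlgebra GroundRing (AGen N) → FreeAlgebra GroundRing (AGen N) → Prop
  | II (i j : Fin N) : ARel (ι GroundRing (AGen.I i) * ι GroundRing (AGen.I j))
      (if i = j then ι GroundRing (AGen.I i) else 0)
  | IU (i j : Fin N) : ARel (ι GroundRing (AGen.I j) * ι GroundRing (AGen.U i))
      (if i = j then ι GroundRing (AGen.U i) else 0)
  | UI (i j : Fin N) : ARel (ι GroundRing (AGen.U i) * ι GroundRing (AGen.I j))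
      (if i = j then ι GroundRing (AGen.U i) else 0)
  | Is (i j : Fin N) : ARel (ι GroundRing (AGen.I j) * ι GroundRing (AGen.s i))
      (if j = i then ι GroundRing (AGen.s i) else 0)
  | sI (i j : Fin N) : ARel (ι GroundRing (AGen.s i) * ι GroundRing (AGen.I j))
      (if j = i + 1 then ι GroundRing (AGen.s i) else 0)
  | UU (i j : Fin N) : i ≠ j → ARel (ι GroundRing (AGen.U i) * ι GroundRing (AGen.U j)) 0
  | Us (i j : Fin N) : ARel (ι GroundRing (AGen.U i) * ι GroundRing (AGen.s j)) 0
  | sU (i j : Fin N) : ARel (ι GroundRing (AGen.s j) * ι GroundRing (AGen.U i)) 0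
  | ss (i j : Fin N) : j ≠ i + 1 → ARel (ι GroundRing (AGen.s i) * ι GroundRing (AGen.s j)) 0

/-- The associative algebra `A₀`, presented by the above generators and relations. -/
abbrev A0 := RingQuot (ARel N)

/-- The idempotent generator `I i` of `A₀`. -/
noncomputable def aI (i : Fin N) : A0 N :=
  RingQuot.mkAlgHom GroundRing (ARel N) (FreeAlgebra.ι GroundRing (AGen.I i))

/-- The generator `U i` of `A₀`. -/
noncomputable def aU (i : Fin N) : A0 N :=
  RingQuot.mkAlgHom GroundRing (ARel N) (FreeAlgebra.ι GroundRing (AGen.U i))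

/-- The generator `s i` of `A₀`. -/
noncomputable def aS (i : Fin N) : A0 N :=
  RingQuot.mkAlgHom GroundRing (ARel N) (FreeAlgebra.ι GroundRing (AGen.s i))

open Fin.NatCast in
/-- `s_{ii} = s_i s_{i+1} ⋯ s_{i-1}`, the full cyclic product of the `N` generators
`s_j` starting at index `i` (indices mod `N`). -/
noncomputable def scyc (i : Fin N) : A0 N :=
  ((List.range N).map (fun k => aS N (i + (k : Fin N)))).prod

/-- Generators of the associative algebra `B₀`: idempotents `I j`, and elements
`ρ j`, `σ j`, for `j` ranging over `Fin N` (indices mod `N`). -/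
inductive BGen (N : ℕ) : Type
  | I : Fin N → BGen N
  | rho : Fin N → BGen N
  | sigma : Fin N → BGen N
deriving DecidableEq

variable (N : ℕ) [NeZero N]

open FreeAlgebra in
/-- The defining relations of `B₀` from the paper:
`I_i I_j = δ_{ij} I_i`; `I_i ρ_j = ρ_j I_i = δ_{ij} ρ_i`; `I_i σ_j = δ_{ij} σ_i`;
`σ_j I_i = σ_j` iff `j ≡ i − 1 (mod N)`; `ρ_i ρ_j = 0` for all `i,j`;
`σ_i σ_j = 0` for all `i,j`; `ρ_i σ_j = 0` unless `i = j`;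
`σ_i ρ_j = 0` unless `j ≡ i + 1 (mod N)`. -/
inductive BRel : FreeAlgebra GroundRing (BGen N) → FreeAlgebra GroundRing (BGen N) → Prop
  | II (i j : Fin N) : BRel (ι GroundRing (BGen.I i) * ι GroundRing (BGen.I j))
      (if i = j then ι GroundRing (BGen.I i) else 0)
  | Ir (i j : Fin N) : BRel (ι GroundRing (BGen.I i) * ι GroundRing (BGen.rho j))
      (if i = j then ι GroundRing (BGen.rho j) else 0)
  | rI (i j : Fin N) : BRel (ι GroundRing (BGen.rho j) * ι GroundRing (BGen.I i))
      (if i = j then ι GroundRing (BGen.rho j) else 0)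
  | Is (i j : Fin N) : BRel (ι GroundRing (BGen.I i) * ι GroundRing (BGen.sigma j))
      (if i = j then ι GroundRing (BGen.sigma j) else 0)
  | sI (i j : Fin N) : BRel (ι GroundRing (BGen.sigma j) * ι GroundRing (BGen.I i))
      (if i = j + 1 then ι GroundRing (BGen.sigma j) else 0)
  | rr (i j : Fin N) : BRel (ι GroundRing (BGen.rho i) * ι GroundRing (BGen.rho j)) 0
  | ss (i j : Fin N) : BRel (ι GroundRing (BGen.sigma i) * ι GroundRing (BGen.sigma j)) 0
  | rs (i j : Fin N) : i ≠ j →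
      BRel (ι GroundRing (BGen.rho i) * ι GroundRing (BGen.sigma j)) 0
  | sr (i j : Fin N) : j ≠ i + 1 →
      BRel (ι GroundRing (BGen.sigma i) * ι GroundRing (BGen.rho j)) 0

/-- The associative algebra `B₀`, presented by the above generators and relations. -/
abbrev B0 := RingQuot (BRel N)

/-- The idempotent generator `I j` of `B₀`. -/
noncomputable def bI (j : Fin N) : B0 N :=
  RingQuot.mkAlgHom GroundRing (BRel N) (FreeAlgebra.ι GroundRing (BGen.I j))

/-- The generator `ρ j` of `B₀`. -/
noncomputable def bR (j : Fin N) : B0 N :=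
  RingQuot.mkAlgHom GroundRing (BRel N) (FreeAlgebra.ι GroundRing (BGen.rho j))

/-- The generator `σ j` of `B₀`. -/
noncomputable def bS (j : Fin N) : B0 N :=
  RingQuot.mkAlgHom GroundRing (BRel N) (FreeAlgebra.ι GroundRing (BGen.sigma j))

/-- The image in `B₀` of a generator. -/
noncomputable def bToB0 : BGen N → B0 N
  | BGen.I j => bI N j
  | BGen.rho j => bR N j
  | BGen.sigma j => bS N j

/-- The product in `B₀` of a word in the generators. -/
noncomputable def prodB (w : List (BGen N)) : B0 N := (w.map (bToB0 N)).prod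

/-- Letters for monomials of the augmentation ideal `A₊` of `A₀`: the generators `U i`, `s i`. -/
inductive APGen (N : ℕ) : Type
  | U : Fin N → APGen N
  | s : Fin N → APGen N
deriving DecidableEq

instance : Inhabited (APGen N) := ⟨APGen.U default⟩

/-- The image in `A₀` of a letter. -/
noncomputable def apToA0 : APGen N → A0 N
  | APGen.U i => aU N i
  | APGen.s i => aS N i

/-- The product in `A₀` of a word in the letters (a basic monomial of `A₊`). -/
noncomputable def prodA (w : List (APGen N)) : A0 N := (w.map (apToA0 N)).prod

/-- The index of the initial idempotent of a letter. -/
def initIdxA : APGen N → Fin N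
  | APGen.U j => j
  | APGen.s j => j

/-- The index of the final idempotent of a letter (`U_j I_j = U_j`, `s_j I_{j+1} = s_j`). -/
def finIdxA : APGen N → Fin N
  | APGen.U j => j
  | APGen.s j => j + 1

/-- The map `φ` on length-one generators: `φ(U_i^*) = ρ_i`, `φ(s_i^*) = σ_i`. -/
noncomputable def phiGen : APGen N → B0 N
  | APGen.U i => bR N i
  | APGen.s i => bS N i

/-- A basis string `a₁^* ⊗ ⋯ ⊗ a_n^*` of the unital cobar complex `Cob~(A₀)`, encoded
as a list of (nonempty) words in the letters `U, s`: each word represents the basic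
monomial `a_k` of `A₊` whose dual `a_k^*` is the `k`-th tensor factor. -/
abbrev CobStr (N : ℕ) := List (List (APGen N))

/-- The map `φ : Cob~(A₀) → B₀` on basis strings: `φ(a₁^* ⊗ ⋯ ⊗ a_n^*) = φ(a_n)⋯φ(a_1)`
if all `a_k` have length one (`φ` reverses order), and `φ = 0` on strings containing
a dual of an element of length `> 1`. -/
noncomputable def phiW (ξ : CobStr N) : B0 N :=
  if ξ.all (fun w => w.length == 1) then
    ((ξ.reverse.map (fun w => phiGen N (w.headD default))).prod)
  else 0

/-- The result of replacing the `i`-th word `a_i` of a cobar string by the pair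
`(a_i)_{≤ k}, (a_i)_{> k}`: one term of the cobar differential
`δ^{Cob}(… ⊗ a_i^* ⊗ …) = … ⊗ μ₂^*(a_i^*) ⊗ …`, dual to the factorization of the
monomial `a_i` at position `k`. -/
def splitA (ξ : CobStr N) (i k : ℕ) : CobStr N :=
  ξ.take i ++ [(ξ.getD i []).take k, (ξ.getD i []).drop k] ++ ξ.drop (i + 1)

/-- The unitality (idempotent-matching) condition defining `Cob~(A₀)` inside the full
cobar complex: the initial idempotent of each `a_k` equals the final idempotent of
`a_{k-1}`. -/
def matchingStr (ξ : CobStr N) : Prop :=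
  ξ.Chain' (fun u v => finIdxA N (u.getLastD default) = initIdxA N (v.headD default))

/-! Each term of `φ(δ ξ)` vanishes by itself. A term survives the length-one test only when
the split word is a two-letter monomial `x y`, and then it contains the factor `φ(y) φ(x)`.
Since `U_i s_j = s_j U_i = 0` in `A₀`, a nonzero monomial `x y` has both letters of the same
kind, and then `φ(y) φ(x)` is `ρ ρ = 0` or `σ σ = 0` in `B₀`. -/

lemma List.prod_append_cons_cons_eq_zero {M : Type*} [MonoidWithZero M] (l₁ l₂ : List M)
    {a b : M} (h : a * b = 0) : (l₁ ++ a :: b :: l₂).prod = 0 := by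
  rw [List.prod_append, List.prod_cons, List.prod_cons, ← mul_assoc a, h, zero_mul, mul_zero]

lemma bR_mul_bR (a b : Fin N) : bR N a * bR N b = 0 := by
  rw [bR, bR, ← map_mul, RingQuot.mkAlgHom_rel GroundRing (BRel.rr a b), map_zero]

lemma bS_mul_bS (a b : Fin N) : bS N a * bS N b = 0 := by
  rw [bS, bS, ← map_mul, RingQuot.mkAlgHom_rel GroundRing (BRel.ss a b), map_zero]

lemma aU_mul_aS (a b : Fin N) : aU N a * aS N b = 0 := by
  rw [aU, aS, ← map_mul, RingQuot.mkAlgHom_rel GroundRing (ARel.Us a b), map_zero]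

lemma aS_mul_aU (a b : Fin N) : aS N a * aU N b = 0 := by
  rw [aS, aU, ← map_mul, RingQuot.mkAlgHom_rel GroundRing (ARel.sU b a), map_zero]

lemma phiGen_mul_phiGen_eq_zero {x y : APGen N} (h : apToA0 N x * apToA0 N y ≠ 0) :
    phiGen N y * phiGen N x = 0 := by
  cases x <;> cases y <;> simp only [apToA0, phiGen] at h ⊢
  · exact bR_mul_bR N _ _
  · exact absurd (aU_mul_aS N _ _) h
  · exact absurd (aS_mul_aU N _ _) h
  · exact bS_mul_bS N _ _

lemma phiW_eq_zero_of_length_ne_one {ξ : CobStr N} {u : List (APGen N)} (hu : u ∈ ξ)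
    (hlen : u.length ≠ 1) : phiW N ξ = 0 := by
  rw [phiW, if_neg]
  simpa using ⟨u, hu, hlen⟩

lemma phiW_append_cons_cons_eq_zero (l₁ l₂ : CobStr N) {x y : APGen N}
    (h : phiGen N y * phiGen N x = 0) : phiW N (l₁ ++ [x] :: [y] :: l₂) = 0 := by
  unfold phiW
  split_ifs
  · simpa using List.prod_append_cons_cons_eq_zero _ _ h
  · rfl

lemma phiW_splitA_eq_zero (ξ : CobStr N) (i k : ℕ) (hw : prodA N (ξ.getD i []) ≠ 0) :
    phiW N (splitA N ξ i k) = 0 := by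
  set w := ξ.getD i []
  by_cases hfst : (w.take k).length = 1
  swap
  · exact phiW_eq_zero_of_length_ne_one N (by simp [splitA, w]) hfst
  by_cases hsnd : (w.drop k).length = 1
  swap
  · exact phiW_eq_zero_of_length_ne_one N (by simp [splitA, w]) hsnd
  obtain ⟨x, hx⟩ := List.length_eq_one_iff.mp hfst
  obtain ⟨y, hy⟩ := List.length_eq_one_iff.mp hsnd
  have hxy : w = [x, y] := by rw [← List.take_append_drop k w, hx, hy]; rfl
  have hsplit : splitA N ξ i k = ξ.take i ++ [x] :: [y] :: ξ.drop (i + 1) := by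
    simp [splitA, ← hx, ← hy, w]
  rw [hsplit]
  refine phiW_append_cons_cons_eq_zero N _ _ (phiGen_mul_phiGen_eq_zero N ?_)
  simpa [prodA, hxy] using hw

theorem phi_is_chain_map (ξ : CobStr N)
    (hnz : ∀ w ∈ ξ, prodA N w ≠ 0) :
    ∑ i ∈ Finset.range ξ.length, ∑ k ∈ Finset.range ((ξ.getD i []).length - 1),
      phiW N (splitA N ξ i (k + 1)) = 0 := by
  refine Finset.sum_eq_zero fun i hi => Finset.sum_eq_zero fun k _ => ?_
  have hmem : ξ.getD i [] ∈ ξ := by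
    rw [List.getD_eq_getElem _ _ (Finset.mem_range.mp hi)]
    exact List.getElem_mem _
  exact phiW_splitA_eq_zero N ξ i (k + 1) (hnz _ hmem)
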